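/- If α ∈ (1/2, 1), then sup over n ≥ 1 of (n+1)^{1−2α} · Σ_{k=1}^{n} ((n+1−k)^α − (n−k)^α)² is finite, bounded by α²/(2α−1). -/

import Mathlib

/-!
Each summand is a squared increment of `t ↦ t ^ α` over a unit interval. Writing it as
`(α ∫ t ^ (α - 1))²` and applying Cauchy–Schwarz bounds it by `α² ∫ t ^ (2α - 2)`, which is
`α² / (2α - 1)` times the increment of `t ↦ t ^ (2α - 1)`; these telescope to
`α² / (2α - 1) · n ^ (2α - 1) ≤ α² / (2α - 1) · (n + 1) ^ (2α - 1)`.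
-/

open MeasureTheory Set Finset

theorem sq_intervalIntegral_le_mul_intervalIntegral_sq {f : ℝ → ℝ} {a b : ℝ} (hab : a ≤ b)
    (hf : IntervalIntegrable f volume a b)
    (hf2 : IntervalIntegrable (fun x => f x ^ 2) volume a b) :
    (∫ x in a..b, f x) ^ 2 ≤ (b - a) * ∫ x in a..b, f x ^ 2 := by
  set I := ∫ x in a..b, f x
  -- Cauchy–Schwarz is the nonnegativity of `∫ ((b - a) f - I)²`.
  have hexpand : ∫ x in a..b, ((b - a) * f x - I) ^ 2
      = (b - a) * ((b - a) * (∫ x in a..b, f x ^ 2) - I ^ 2) := by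
    have hsq : ∀ x, ((b - a) * f x - I) ^ 2
        = (b - a) ^ 2 * f x ^ 2 - 2 * (b - a) * I * f x + I ^ 2 := fun x => by ring
    simp only [hsq]
    rw [intervalIntegral.integral_add ((hf2.const_mul _).sub (hf.const_mul _))
        intervalIntegrable_const,
      intervalIntegral.integral_sub (hf2.const_mul _) (hf.const_mul _),
      intervalIntegral.integral_const_mul, intervalIntegral.integral_const_mul,
      intervalIntegral.integral_const, smul_eq_mul]
    ring
  have hnonneg : 0 ≤ (b - a) * ((b - a) * (∫ x in a..b, f x ^ 2) - I ^ 2) :=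
    hexpand ▸ intervalIntegral.integral_nonneg hab fun x _ => sq_nonneg _
  rcases hab.eq_or_lt with rfl | hlt
  · simp [I]
  · nlinarith [(mul_nonneg_iff_of_pos_left (sub_pos.2 hlt)).1 hnonneg]

theorem sq_rpow_sub_rpow_le {α a b : ℝ} (hα : 1 / 2 < α) (ha : 0 ≤ a) (hab : a ≤ b) :
    (b ^ α - a ^ α) ^ 2 ≤ α ^ 2 / (2 * α - 1) * (b - a) * (b ^ (2 * α - 1) - a ^ (2 * α - 1)) := by
  have hα0 : α ≠ 0 := by linarith
  have hβ0 : 2 * α - 1 ≠ 0 := by linarith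
  have hsq : EqOn (fun t : ℝ => t ^ (2 * α - 2)) (fun t => (t ^ (α - 1)) ^ 2) (uIcc a b) :=
    fun t ht => by
      have ht0 : 0 ≤ t := ha.trans (uIcc_of_le hab ▸ ht).1
      simp only [← Real.rpow_mul_natCast ht0]
      ring_nf
  have hf := intervalIntegral.intervalIntegrable_rpow' (a := a) (b := b)
    (by linarith : -1 < α - 1)
  have hf2 := (intervalIntegral.intervalIntegrable_rpow' (a := a) (b := b)
    (by linarith : -1 < 2 * α - 2)).congr (hsq.mono uIoc_subset_uIcc)
  have hint : ∫ t in a..b, t ^ (α - 1) = (b ^ α - a ^ α) / α := by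
    rw [integral_rpow (Or.inl (by linarith))]
    ring_nf
  have hint2 : ∫ t in a..b, (t ^ (α - 1)) ^ 2
      = (b ^ (2 * α - 1) - a ^ (2 * α - 1)) / (2 * α - 1) := by
    rw [← intervalIntegral.integral_congr hsq, integral_rpow (Or.inl (by linarith))]
    ring_nf
  have hCS := sq_intervalIntegral_le_mul_intervalIntegral_sq hab hf hf2
  rw [hint, hint2, div_pow, div_le_iff₀ (by positivity)] at hCS
  exact hCS.trans_eq (by field_simp)

theorem sum_range_sq_rpow_succ_sub_rpow_le {α : ℝ} (hα : 1 / 2 < α) (n : ℕ) :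
    ∑ j ∈ range n, (((j : ℝ) + 1) ^ α - (j : ℝ) ^ α) ^ 2
      ≤ α ^ 2 / (2 * α - 1) * (n : ℝ) ^ (2 * α - 1) := by
  calc ∑ j ∈ range n, (((j : ℝ) + 1) ^ α - (j : ℝ) ^ α) ^ 2
      ≤ ∑ j ∈ range n, α ^ 2 / (2 * α - 1) * ((j : ℝ) + 1 - j)
          * (((j : ℝ) + 1) ^ (2 * α - 1) - (j : ℝ) ^ (2 * α - 1)) :=
        sum_le_sum fun j _ => sq_rpow_sub_rpow_le hα j.cast_nonneg (by linarith)
    _ = α ^ 2 / (2 * α - 1) * ∑ j ∈ range n,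
          ((((j + 1 : ℕ) : ℝ)) ^ (2 * α - 1) - (j : ℝ) ^ (2 * α - 1)) := by
        rw [mul_sum]
        push_cast
        ring_nf
    _ = α ^ 2 / (2 * α - 1) * (n : ℝ) ^ (2 * α - 1) := by
        rw [sum_range_sub (fun j : ℕ => (j : ℝ) ^ (2 * α - 1)), Nat.cast_zero,
          Real.zero_rpow (by linarith), sub_zero]

theorem sum_Icc_natCast_sub_eq_sum_range {M : Type*} [AddCommMonoid M] (g : ℝ → M) (n : ℕ) :
    ∑ k ∈ Icc 1 n, g ((n : ℝ) - k) = ∑ j ∈ range n, g j := by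
  rw [← sum_range_reflect, ← Finset.Ico_add_one_right_eq_Icc, sum_Ico_eq_sum_range,
    Nat.add_sub_cancel]
  refine sum_congr rfl fun j hj => ?_
  rw [Nat.sub_sub, Nat.cast_sub (by rw [add_comm]; exact mem_range.1 hj)]

theorem stmt9_general (α : ℝ) (hα1 : 1 / 2 < α) :
    ∀ n : ℕ, 1 ≤ n →
      ((n : ℝ) + 1) ^ (1 - 2 * α) * ∑ k ∈ Finset.Icc 1 n,
          (((n : ℝ) + 1 - (k : ℝ)) ^ α - ((n : ℝ) - (k : ℝ)) ^ α) ^ 2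
        ≤ α ^ 2 / (2 * α - 1) := by
  intro n _
  have hn : (0 : ℝ) < n + 1 := by positivity
  have hC : 0 ≤ α ^ 2 / (2 * α - 1) := div_nonneg (sq_nonneg α) (by linarith)
  simp_rw [add_sub_right_comm _ (1 : ℝ)]
  rw [sum_Icc_natCast_sub_eq_sum_range (fun x => ((x + 1) ^ α - x ^ α) ^ 2)]
  calc ((n : ℝ) + 1) ^ (1 - 2 * α) * ∑ j ∈ range n, (((j : ℝ) + 1) ^ α - (j : ℝ) ^ α) ^ 2
      ≤ ((n : ℝ) + 1) ^ (1 - 2 * α) * (α ^ 2 / (2 * α - 1) * ((n : ℝ) + 1) ^ (2 * α - 1)) := by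
        gcongr
        exact (sum_range_sq_rpow_succ_sub_rpow_le hα1 n).trans (by gcongr <;> linarith)
    _ = α ^ 2 / (2 * α - 1) := by
        rw [mul_left_comm, ← Real.rpow_add hn]
        norm_num

theorem stmt9 (α : ℝ) (hα1 : 1 / 2 < α) (hα2 : α < 1) :
    ∀ n : ℕ, 1 ≤ n →
      ((n : ℝ) + 1) ^ (1 - 2 * α) * ∑ k ∈ Finset.Icc 1 n,
          (((n : ℝ) + 1 - (k : ℝ)) ^ α - ((n : ℝ) - (k : ℝ)) ^ α) ^ 2
        ≤ α ^ 2 / (2 * α - 1) :=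
  stmt9_general α hα1
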